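/- Let (Ω, F, P) be a probability space and f, g be F-measurable real-valued functions with g ≠ 0 a.s. Then for any ε > 0, sup_x |P(f/g ≤ x) - Φ(x)| ≤ sup_y |P(f ≤ y) - Φ(y)| + P(|g - 1| > ε) + ε, where Φ is the standard normal CDF. -/

import Mathlib

open MeasureTheory

/-- The standard normal cumulative distribution function. -/
noncomputable def stdNormalCDF (x : ℝ) : ℝ :=
  ∫ u in Set.Iic x, (Real.sqrt (2 * Real.pi))⁻¹ * Real.exp (-u ^ 2 / 2)

/-!
On the event `|g - 1| ≤ ε < 1` we have `g > 0`, so `f / g ≤ x` iff `f ≤ x g`, and `x g` lies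
between `x (1 - ε)` and `x (1 + ε)`. Off an event of probability `P(|g - 1| > ε)` the event
`f / g ≤ x` is therefore squeezed between `f ≤ x (1 ∓ ε)`, and it remains to see that rescaling
the argument by `c` moves `Φ` by at most `|c - 1|`. For `0 ≤ a ≤ b` one has
`Φ b - Φ a ≤ φ a (b - a)`, and `t φ t ≤ 1/2`, which gives this bound for `c ≥ 1/2`; for smaller `c`
the increment is at most `Φ x - Φ 0 ≤ 1/2`, and negative `x` follows from `Φ (-x) = 1 - Φ x`.
-/

open ProbabilityTheory Real Set

namespace StdNormal

local notation "φ" => gaussianPDFReal 0 1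

lemma stdNormalCDF_eq_integral (x : ℝ) : stdNormalCDF x = ∫ u in Iic x, φ u := by
  simp [stdNormalCDF, gaussianPDFReal]

lemma gaussianPDFReal_zero_one_neg (u : ℝ) : φ (-u) = φ u := by
  simp [gaussianPDFReal]

lemma sub_stdNormalCDF_eq_integral {a b : ℝ} (hab : a ≤ b) :
    stdNormalCDF b - stdNormalCDF a = ∫ u in Ioc a b, φ u := by
  rw [stdNormalCDF_eq_integral, stdNormalCDF_eq_integral, ← Iic_union_Ioc_eq_Iic hab,
    setIntegral_union (Iic_disjoint_Ioc le_rfl) measurableSet_Ioc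
      (integrable_gaussianPDFReal 0 1).integrableOn (integrable_gaussianPDFReal 0 1).integrableOn]
  ring

lemma stdNormalCDF_nonneg (x : ℝ) : 0 ≤ stdNormalCDF x := by
  rw [stdNormalCDF_eq_integral]
  exact setIntegral_nonneg measurableSet_Iic fun u _ ↦ gaussianPDFReal_nonneg 0 1 u

lemma stdNormalCDF_le_one (x : ℝ) : stdNormalCDF x ≤ 1 := by
  rw [stdNormalCDF_eq_integral, ← integral_gaussianPDFReal_eq_one 0 one_ne_zero]
  exact setIntegral_le_integral (integrable_gaussianPDFReal 0 1)
    (Filter.Eventually.of_forall (gaussianPDFReal_nonneg 0 1))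

lemma stdNormalCDF_mono : Monotone stdNormalCDF := fun a b hab ↦ by
  have := sub_stdNormalCDF_eq_integral hab
  have : 0 ≤ ∫ u in Ioc a b, φ u :=
    setIntegral_nonneg measurableSet_Ioc fun u _ ↦ gaussianPDFReal_nonneg 0 1 u
  linarith

lemma stdNormalCDF_neg (x : ℝ) : stdNormalCDF (-x) = 1 - stdNormalCDF x := by
  have h_tail : stdNormalCDF (-x) = ∫ u in Ioi x, φ u := by
    rw [stdNormalCDF_eq_integral, ← neg_neg x, ← integral_comp_neg_Iic, neg_neg]
    simp_rw [gaussianPDFReal_zero_one_neg]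
  have h_total : stdNormalCDF x + ∫ u in Ioi x, φ u = 1 := by
    rw [stdNormalCDF_eq_integral, ← setIntegral_union (Iic_disjoint_Ioi le_rfl) measurableSet_Ioi
      (integrable_gaussianPDFReal 0 1).integrableOn (integrable_gaussianPDFReal 0 1).integrableOn,
      Iic_union_Ioi, setIntegral_univ, integral_gaussianPDFReal_eq_one 0 one_ne_zero]
  linarith

lemma stdNormalCDF_zero : stdNormalCDF 0 = 1 / 2 := by
  have := stdNormalCDF_neg 0
  rw [neg_zero] at this
  linarith

lemma gaussianPDFReal_zero_one_antitoneOn : AntitoneOn φ (Ici 0) := fun s hs u _ hsu ↦ by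
  simp only [gaussianPDFReal, sub_zero]
  gcongr

lemma mul_gaussianPDFReal_zero_one_le (t : ℝ) : t * φ t ≤ 1 / 2 := by
  -- `t ≤ 1 + t²/2 ≤ exp (t²/2)` and `√(2π) ≥ 2`
  have h_exp : t * exp (-t ^ 2 / 2) ≤ 1 := by
    have h := add_one_le_exp (t ^ 2 / 2)
    rw [neg_div, exp_neg, ← div_eq_mul_inv, div_le_one (exp_pos _)]
    nlinarith [sq_nonneg (t - 1)]
  have h_sqrt : 2 ≤ √(2 * π) :=
    le_sqrt_of_sq_le (by nlinarith [pi_gt_three])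
  have h_inv : (√(2 * π))⁻¹ ≤ 1 / 2 := by
    rw [one_div]; exact inv_anti₀ two_pos h_sqrt
  calc t * φ t = (√(2 * π))⁻¹ * (t * exp (-t ^ 2 / 2)) := by
        simp only [gaussianPDFReal, NNReal.coe_one, mul_one, sub_zero]; ring
    _ ≤ (√(2 * π))⁻¹ * 1 := by gcongr
    _ ≤ 1 / 2 := by rw [mul_one]; exact h_inv

lemma sub_stdNormalCDF_le {a b : ℝ} (ha : 0 ≤ a) (hab : a ≤ b) :
    stdNormalCDF b - stdNormalCDF a ≤ φ a * (b - a) := by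
  rw [sub_stdNormalCDF_eq_integral hab]
  calc ∫ u in Ioc a b, φ u ≤ ∫ _ in Ioc a b, φ a :=
        setIntegral_mono_on (integrable_gaussianPDFReal 0 1).integrableOn
          (integrableOn_const (by simp) (by simp)) measurableSet_Ioc fun u hu ↦
            gaussianPDFReal_zero_one_antitoneOn ha (ha.trans hu.1.le) hu.1.le
    _ = φ a * (b - a) := by
        rw [setIntegral_const, Measure.real, Real.volume_Ioc,
          ENNReal.toReal_ofReal (sub_nonneg.2 hab), smul_eq_mul, mul_comm]

lemma abs_stdNormalCDF_mul_sub_le_of_nonneg {x : ℝ} (hx : 0 ≤ x) (c : ℝ) :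
    |stdNormalCDF (x * c) - stdNormalCDF x| ≤ |c - 1| := by
  rcases lt_or_ge c 0 with hc | hc
  · calc |stdNormalCDF (x * c) - stdNormalCDF x| ≤ 1 :=
          abs_sub_le_of_nonneg_of_le (stdNormalCDF_nonneg _) (stdNormalCDF_le_one _)
            (stdNormalCDF_nonneg _) (stdNormalCDF_le_one _)
      _ ≤ |c - 1| := by rw [abs_of_neg (by linarith)]; linarith
  rcases le_total 1 c with hc1 | hc1
  · have h_le : x ≤ x * c := le_mul_of_one_le_right hx hc1
    rw [abs_of_nonneg (sub_nonneg.2 (stdNormalCDF_mono h_le)), abs_of_nonneg (by linarith)]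
    calc stdNormalCDF (x * c) - stdNormalCDF x ≤ φ x * (x * c - x) := sub_stdNormalCDF_le hx h_le
      _ = (c - 1) * (x * φ x) := by ring
      _ ≤ (c - 1) * (1 / 2) :=
          mul_le_mul_of_nonneg_left (mul_gaussianPDFReal_zero_one_le x) (by linarith)
      _ ≤ c - 1 := by linarith
  have h_le : x * c ≤ x := mul_le_of_le_one_right hx hc1
  rw [abs_sub_comm, abs_of_nonneg (sub_nonneg.2 (stdNormalCDF_mono h_le)),
    abs_of_nonpos (by linarith)]
  rcases lt_or_ge c (1 / 2) with hc2 | hc2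
  · have := stdNormalCDF_mono (mul_nonneg hx hc)
    linarith [stdNormalCDF_le_one x, stdNormalCDF_zero]
  · have h_xc : 0 ≤ x * c := mul_nonneg hx hc
    calc stdNormalCDF x - stdNormalCDF (x * c) ≤ φ (x * c) * (x - x * c) :=
          sub_stdNormalCDF_le h_xc h_le
      _ = (1 - c) * x * φ (x * c) := by ring
      _ ≤ (1 - c) * (2 * (x * c)) * φ (x * c) := by
          have := gaussianPDFReal_nonneg 0 1 (x * c)
          gcongr
          nlinarith
      _ = 2 * (1 - c) * ((x * c) * φ (x * c)) := by ring
      _ ≤ 2 * (1 - c) * (1 / 2) :=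
          mul_le_mul_of_nonneg_left (mul_gaussianPDFReal_zero_one_le _) (by linarith)
      _ = -(c - 1) := by ring

theorem abs_stdNormalCDF_mul_sub_le (x c : ℝ) :
    |stdNormalCDF (x * c) - stdNormalCDF x| ≤ |c - 1| := by
  rcases le_total 0 x with hx | hx
  · exact abs_stdNormalCDF_mul_sub_le_of_nonneg hx c
  · have h := abs_stdNormalCDF_mul_sub_le_of_nonneg (neg_nonneg.2 hx) c
    rwa [neg_mul, stdNormalCDF_neg, stdNormalCDF_neg, ← abs_neg, neg_sub,
      show 1 - stdNormalCDF x - (1 - stdNormalCDF (x * c)) =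
        stdNormalCDF (x * c) - stdNormalCDF x by ring] at h

lemma abs_stdNormalCDF_sub_le_of_eq_or_eq {x y ε : ℝ} (hε : 0 ≤ ε)
    (hy : y = x * (1 - ε) ∨ y = x * (1 + ε)) : |stdNormalCDF y - stdNormalCDF x| ≤ ε := by
  rcases hy with rfl | rfl
  · simpa [abs_of_nonneg hε] using abs_stdNormalCDF_mul_sub_le x (1 - ε)
  · simpa [abs_of_nonneg hε] using abs_stdNormalCDF_mul_sub_le x (1 + ε)

lemma abs_measureReal_sub_stdNormalCDF_le_one {Ω : Type*} [MeasurableSpace Ω] (P : Measure Ω)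
    [IsZeroOrProbabilityMeasure P] (s : Set Ω) (y : ℝ) : |P.real s - stdNormalCDF y| ≤ 1 :=
  abs_sub_le_of_nonneg_of_le measureReal_nonneg measureReal_le_one
    (stdNormalCDF_nonneg y) (stdNormalCDF_le_one y)

end StdNormal

section Ratio

variable {x y z ε : ℝ}

lemma mul_mem_uIcc_of_abs_sub_one_le (hy : |y - 1| ≤ ε) :
    x * y ∈ uIcc (x * (1 - ε)) (x * (1 + ε)) := by
  rw [← image_const_mul_uIcc]
  obtain ⟨h₁, h₂⟩ := abs_sub_le_iff.1 hy
  exact mem_image_of_mem _ (Icc_subset_uIcc ⟨by linarith, by linarith⟩)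

lemma le_sup_of_div_le (hy : |y - 1| ≤ ε) (hε : ε < 1) (h : z / y ≤ x) :
    z ≤ x * (1 - ε) ⊔ x * (1 + ε) := by
  have hy₀ : 0 < y := by linarith [neg_abs_le (y - 1)]
  exact ((div_le_iff₀ hy₀).1 h).trans (mul_mem_uIcc_of_abs_sub_one_le hy).2

lemma div_le_of_le_inf (hy : |y - 1| ≤ ε) (hε : ε < 1) (h : z ≤ x * (1 - ε) ⊓ x * (1 + ε)) :
    z / y ≤ x := by
  have hy₀ : 0 < y := by linarith [neg_abs_le (y - 1)]
  exact (div_le_iff₀ hy₀).2 (h.trans (mul_mem_uIcc_of_abs_sub_one_le hy).1)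

end Ratio

open StdNormal in
theorem michael_pfanzagl_general
    {Ω : Type*} [MeasurableSpace Ω] (P : Measure Ω) [IsProbabilityMeasure P]
    (f g : Ω → ℝ) (ε : ℝ) (hε : 0 < ε) :
    ∀ x : ℝ,
      |(P {ω | f ω / g ω ≤ x}).toReal - stdNormalCDF x| ≤
        (⨆ y : ℝ, |(P {ω | f ω ≤ y}).toReal - stdNormalCDF y|) +
          (P {ω | |g ω - 1| > ε}).toReal + ε := by
  intro x
  simp only [← measureReal_def]
  set Δ := ⨆ y : ℝ, |P.real {ω | f ω ≤ y} - stdNormalCDF y|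
  set B := {ω | |g ω - 1| > ε}
  have hΔ : ∀ y, |P.real {ω | f ω ≤ y} - stdNormalCDF y| ≤ Δ :=
    le_ciSup ⟨1, by rintro _ ⟨y, rfl⟩; exact abs_measureReal_sub_stdNormalCDF_le_one P _ y⟩
  rcases le_or_gt 1 ε with hε₁ | hε₁
  · linarith [abs_measureReal_sub_stdNormalCDF_le_one P {ω | f ω / g ω ≤ x} x,
      (abs_nonneg _).trans (hΔ 0), measureReal_nonneg (μ := P) (s := B)]
  set lo := x * (1 - ε) ⊓ x * (1 + ε)
  set hi := x * (1 - ε) ⊔ x * (1 + ε)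
  have h_up : P.real {ω | f ω / g ω ≤ x} ≤ P.real {ω | f ω ≤ hi} + P.real B :=
    (measureReal_mono fun ω hω ↦ (le_or_gt |g ω - 1| ε).imp
      (le_sup_of_div_le · hε₁ hω) id).trans (measureReal_union_le _ _)
  have h_lo : P.real {ω | f ω ≤ lo} ≤ P.real {ω | f ω / g ω ≤ x} + P.real B :=
    (measureReal_mono fun ω hω ↦ (le_or_gt |g ω - 1| ε).imp
      (div_le_of_le_inf · hε₁ hω) id).trans (measureReal_union_le _ _)
  have hΦ_hi := abs_stdNormalCDF_sub_le_of_eq_or_eq hε.le (max_choice (x * (1 - ε)) _)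
  have hΦ_lo := abs_stdNormalCDF_sub_le_of_eq_or_eq hε.le (min_choice (x * (1 - ε)) _)
  rw [abs_sub_le_iff] at hΦ_hi hΦ_lo ⊢
  constructor <;> linarith [abs_sub_le_iff.1 (hΔ hi), abs_sub_le_iff.1 (hΔ lo)]

theorem michael_pfanzagl
    {Ω : Type*} [MeasurableSpace Ω] (P : Measure Ω) [IsProbabilityMeasure P]
    (f g : Ω → ℝ) (hf : Measurable f) (hg : Measurable g)
    (hg0 : ∀ᵐ ω ∂P, g ω ≠ 0) (ε : ℝ) (hε : 0 < ε) :
    ∀ x : ℝ,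
      |(P {ω | f ω / g ω ≤ x}).toReal - stdNormalCDF x| ≤
        (⨆ y : ℝ, |(P {ω | f ω ≤ y}).toReal - stdNormalCDF y|) +
          (P {ω | |g ω - 1| > ε}).toReal + ε :=
  michael_pfanzagl_general P f g ε hε
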